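/- arXiv:1908.08944 — 2 statements merged into one kernel-verified Lean document; each statement's English description precedes it below -/
import Mathlib

section
/- Beck–Chevalley swap: let p : C → B be a fibration and g : C₀ → D, k : B₀ → D morphisms in B. If for every Q in the fiber over B₀ there exists a Π-diagram (right-adjoint-type universal diagram) over k based on Q which is stable along g, then every cocartesian lift of g is stable along k, i.e., for every pullback square f,h with g,k and any cocartesian lift of g, the induced comparison morphism over f obtained by pulling back is again cocartesian. -/
/-! For `W` over `B₀` take the stable `Π`-diagram `Π_k W`. Vertical maps `Z' = k*Z ⟶ W`
correspond to vertical maps `Z ⟶ Π_k W`, hence (`t` being cocartesian) to maps `P ⟶ Π_k W` over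
`g`, i.e. to vertical maps `P ⟶ g*Π_k W`. By the Beck–Chevalley condition `g*Π_k W = Π_h f*W`,
so these correspond to vertical maps `P' = h*P ⟶ f*W`, i.e. to maps `P' ⟶ W` over `f`. The
composite bijection is `χ ↦ m ≫ χ`, so `m` is cocartesian with respect to vertical maps, and in a
fibration this already makes it strongly cocartesian. -/

open CategoryTheory CategoryTheory.Limits CategoryTheory.Functor

namespace FOHL

variable {𝒮 : Type*} {𝒳 : Type*} [Category 𝒮] [Category 𝒳]

variable (p : 𝒳 ⥤ 𝒮)

/-- A binary product diagram in the fiber of `p` over `S`. -/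
structure IsFiberProductFan (S : 𝒮) {P Q T : 𝒳} (π₁ : T ⟶ P) (π₂ : T ⟶ Q) : Prop where
  lift₁ : p.IsHomLift (𝟙 S) π₁
  lift₂ : p.IsHomLift (𝟙 S) π₂
  universal : ∀ {X : 𝒳} (u : X ⟶ P) (v : X ⟶ Q),
    p.IsHomLift (𝟙 S) u → p.IsHomLift (𝟙 S) v →
      ∃! w : X ⟶ T, p.IsHomLift (𝟙 S) w ∧ w ≫ π₁ = u ∧ w ≫ π₂ = v

/-- A binary coproduct diagram in the fiber of `p` over `S`. -/
structure IsFiberCoproductCofan (S : 𝒮) {P Q T : 𝒳} (ι₁ : P ⟶ T) (ι₂ : Q ⟶ T) : Prop where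
  lift₁ : p.IsHomLift (𝟙 S) ι₁
  lift₂ : p.IsHomLift (𝟙 S) ι₂
  universal : ∀ {X : 𝒳} (u : P ⟶ X) (v : Q ⟶ X),
    p.IsHomLift (𝟙 S) u → p.IsHomLift (𝟙 S) v →
      ∃! w : T ⟶ X, p.IsHomLift (𝟙 S) w ∧ ι₁ ≫ w = u ∧ ι₂ ≫ w = v

/-- A terminal object of the fiber of `p` over `S`. -/
structure IsFiberTerminal (S : 𝒮) (T : 𝒳) : Prop where
  lies_over : p.obj T = S
  universal : ∀ X : 𝒳, p.obj X = S → ∃! u : X ⟶ T, p.IsHomLift (𝟙 S) u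

/-- An initial object of the fiber of `p` over `S`. -/
structure IsFiberInitial (S : 𝒮) (T : 𝒳) : Prop where
  lies_over : p.obj T = S
  universal : ∀ X : 𝒳, p.obj X = S → ∃! u : T ⟶ X, p.IsHomLift (𝟙 S) u

/-- An exponential diagram in the fiber of `p` over `S`: `E` is the exponential `P ⟹ Q`,
`π₁ : W ⟶ E`, `π₂ : W ⟶ P` is a product fan exhibiting `W = E ∧ P`, and `ev : W ⟶ Q` is the
evaluation morphism. -/
structure IsFiberExponential (S : 𝒮) {P Q E W : 𝒳}
    (π₁ : W ⟶ E) (π₂ : W ⟶ P) (ev : W ⟶ Q) : Prop where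
  fan : IsFiberProductFan p S π₁ π₂
  ev_lift : p.IsHomLift (𝟙 S) ev
  universal : ∀ {X V : 𝒳} (ρ₁ : V ⟶ X) (ρ₂ : V ⟶ P), IsFiberProductFan p S ρ₁ ρ₂ →
    ∀ g : V ⟶ Q, p.IsHomLift (𝟙 S) g →
      ∃! h : X ⟶ E, p.IsHomLift (𝟙 S) h ∧
        ∀ m : V ⟶ W, p.IsHomLift (𝟙 S) m → m ≫ π₁ = ρ₁ ≫ h → m ≫ π₂ = ρ₂ →
          m ≫ ev = g

/-- Stability of fiberwise binary product diagrams under pullback along `f`. -/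
def ProductsStableAlong {R S : 𝒮} (f : R ⟶ S) : Prop :=
  ∀ {P Q T P' Q' T' : 𝒳} (π₁ : T ⟶ P) (π₂ : T ⟶ Q)
    (π₁' : T' ⟶ P') (π₂' : T' ⟶ Q') (cP : P' ⟶ P) (cQ : Q' ⟶ Q) (cT : T' ⟶ T),
    IsFiberProductFan p S π₁ π₂ →
    p.IsStronglyCartesian f cP → p.IsStronglyCartesian f cQ → p.IsStronglyCartesian f cT →
    p.IsHomLift (𝟙 R) π₁' → p.IsHomLift (𝟙 R) π₂' →
    π₁' ≫ cP = cT ≫ π₁ → π₂' ≫ cQ = cT ≫ π₂ →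
    IsFiberProductFan p R π₁' π₂'

/-- Stability of fiberwise binary coproduct diagrams under pullback along `f`. -/
def CoproductsStableAlong {R S : 𝒮} (f : R ⟶ S) : Prop :=
  ∀ {P Q T P' Q' T' : 𝒳} (ι₁ : P ⟶ T) (ι₂ : Q ⟶ T)
    (ι₁' : P' ⟶ T') (ι₂' : Q' ⟶ T') (cP : P' ⟶ P) (cQ : Q' ⟶ Q) (cT : T' ⟶ T),
    IsFiberCoproductCofan p S ι₁ ι₂ →
    p.IsStronglyCartesian f cP → p.IsStronglyCartesian f cQ → p.IsStronglyCartesian f cT →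
    p.IsHomLift (𝟙 R) ι₁' → p.IsHomLift (𝟙 R) ι₂' →
    ι₁' ≫ cT = cP ≫ ι₁ → ι₂' ≫ cT = cQ ≫ ι₂ →
    IsFiberCoproductCofan p R ι₁' ι₂'

/-- Stability of fiberwise exponential diagrams under pullback along `f`. -/
def ExponentialsStableAlong {R S : 𝒮} (f : R ⟶ S) : Prop :=
  ∀ {P Q E W P' Q' E' W' : 𝒳} (π₁ : W ⟶ E) (π₂ : W ⟶ P) (ev : W ⟶ Q)
    (π₁' : W' ⟶ E') (π₂' : W' ⟶ P') (ev' : W' ⟶ Q')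
    (cE : E' ⟶ E) (cP : P' ⟶ P) (cQ : Q' ⟶ Q) (cW : W' ⟶ W),
    IsFiberExponential p S π₁ π₂ ev →
    p.IsStronglyCartesian f cE → p.IsStronglyCartesian f cP →
    p.IsStronglyCartesian f cQ → p.IsStronglyCartesian f cW →
    p.IsHomLift (𝟙 R) π₁' → p.IsHomLift (𝟙 R) π₂' → p.IsHomLift (𝟙 R) ev' →
    π₁' ≫ cE = cW ≫ π₁ → π₂' ≫ cP = cW ≫ π₂ → ev' ≫ cQ = cW ≫ ev →
    IsFiberExponential p R π₁' π₂' ev'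

/-- A `Π`-diagram over `f : R ⟶ S` based on `P` (with `P` in the fiber over `R`): a cartesian
morphism `c : X ⟶ Y` over `f` (so `X = f*Y`, `Y = Π_f P`) and a vertical evaluation morphism
`ε : X ⟶ P` which is universal: for every cartesian `c' : X' ⟶ Y'` over `f` and vertical
`u : X' ⟶ P` there is a unique vertical `v : Y' ⟶ Y` whose pullback composed with `ε` is `u`. -/
structure IsPiDiagram {R S : 𝒮} (f : R ⟶ S) {P X Y : 𝒳} (c : X ⟶ Y) (ε : X ⟶ P) : Prop where
  cart : p.IsStronglyCartesian f c
  vert : p.IsHomLift (𝟙 R) ε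
  universal : ∀ {X' Y' : 𝒳} (c' : X' ⟶ Y'), p.IsStronglyCartesian f c' →
    ∀ u : X' ⟶ P, p.IsHomLift (𝟙 R) u →
      ∃! v : Y' ⟶ Y, p.IsHomLift (𝟙 S) v ∧
        ∀ w : X' ⟶ X, p.IsHomLift (𝟙 R) w → w ≫ c = c' ≫ v → w ≫ ε = u

/-- The Beck–Chevalley condition: stability of a `Π`-diagram over `g : Cc ⟶ D` along
`k : Bb ⟶ D`.  For every pullback square and every pullback of the diagram along the square,
the resulting diagram is again a `Π`-diagram. -/
def PiDiagramStableAlong {Cc D : 𝒮} (g : Cc ⟶ D) {P X Y : 𝒳} (c : X ⟶ Y) (ε : X ⟶ P)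
    {Bb : 𝒮} (k : Bb ⟶ D) : Prop :=
  ∀ {A : 𝒮} (f : A ⟶ Bb) (h : A ⟶ Cc), IsPullback f h k g →
    ∀ {P' X' Y' : 𝒳} (cP : P' ⟶ P) (cX : X' ⟶ X) (cY : Y' ⟶ Y)
      (q : X' ⟶ Y') (ε' : X' ⟶ P'),
      p.IsStronglyCartesian h cP → p.IsStronglyCartesian h cX → p.IsStronglyCartesian k cY →
      p.IsHomLift f q → q ≫ cY = cX ≫ c →
      p.IsHomLift (𝟙 A) ε' → ε' ≫ cP = cX ≫ ε →
      IsPiDiagram p f q ε'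

/-- Stability of a cocartesian lift `t : P ⟶ Z` of `g : Cc ⟶ D` along `k : Bb ⟶ D`:
for every pullback square, the induced comparison morphism between the pullbacks is again
cocartesian. -/
def CocartesianStableAlong {Cc D : 𝒮} (g : Cc ⟶ D) {P Z : 𝒳} (t : P ⟶ Z)
    {Bb : 𝒮} (k : Bb ⟶ D) : Prop :=
  ∀ {A : 𝒮} (f : A ⟶ Bb) (h : A ⟶ Cc), IsPullback f h k g →
    ∀ {P' Z' : 𝒳} (cP : P' ⟶ P) (cZ : Z' ⟶ Z) (m : P' ⟶ Z'),
      p.IsStronglyCartesian h cP → p.IsStronglyCartesian k cZ →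
      p.IsHomLift f m → m ≫ cZ = cP ≫ t →
      p.IsStronglyCocartesian f m

abbrev HomOver {R S : 𝒮} (f : R ⟶ S) (a b : 𝒳) : Type _ := {φ : a ⟶ b // p.IsHomLift f φ}

variable {p}

def HomOver.comp {R S T : 𝒮} {f : R ⟶ S} {g : S ⟶ T} {h : R ⟶ T} (hfg : h = f ≫ g)
    {a b c : 𝒳} (φ : HomOver p f a b) (ψ : HomOver p g b c) : HomOver p h a c :=
  ⟨φ.1 ≫ ψ.1, by have := φ.2; have := ψ.2; subst hfg; infer_instance⟩

lemma bijective_comp_of_isStronglyCartesian {R' R S : 𝒮} {f : R ⟶ S} {g : R' ⟶ R}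
    {f' : R' ⟶ S} (hf' : f' = g ≫ f) {a' a b : 𝒳} (φ : a ⟶ b) [p.IsStronglyCartesian f φ] :
    Function.Bijective fun ψ : HomOver p g a' a => ψ.comp hf' ⟨φ, inferInstance⟩ := by
  rw [Function.bijective_iff_existsUnique]
  rintro ⟨φ', _⟩
  obtain ⟨χ, ⟨hχ, hχφ⟩, huniq⟩ := IsStronglyCartesian.universal_property p f φ g f' hf' φ'
  exact ⟨⟨χ, hχ⟩, Subtype.ext hχφ,
    fun ψ hψ => Subtype.ext (huniq ψ.1 ⟨ψ.2, congrArg Subtype.val hψ⟩)⟩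

lemma bijective_comp_of_isStronglyCocartesian {R S S' : 𝒮} {f : R ⟶ S} {g : S ⟶ S'}
    {f' : R ⟶ S'} (hf' : f' = f ≫ g) {a b b' : 𝒳} (φ : a ⟶ b) [p.IsStronglyCocartesian f φ] :
    Function.Bijective fun ψ : HomOver p g b b' => HomOver.comp hf' ⟨φ, inferInstance⟩ ψ := by
  rw [Function.bijective_iff_existsUnique]
  rintro ⟨φ', _⟩
  obtain ⟨χ, ⟨hχ, hφχ⟩, huniq⟩ := IsStronglyCocartesian.universal_property p f φ g f' hf' φ'
  exact ⟨⟨χ, hχ⟩, Subtype.ext hφχ,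
    fun ψ hψ => Subtype.ext (huniq ψ.1 ⟨ψ.2, congrArg Subtype.val hψ⟩)⟩

lemma isStronglyCocartesian_of_bijective_comp {R S : 𝒮} {f : R ⟶ S} {a b : 𝒳} (φ : a ⟶ b)
    [p.IsHomLift f φ] (hφ : ∀ (b' : 𝒳) (g : S ⟶ p.obj b'),
      Function.Bijective fun ψ : HomOver p g b b' =>
        (HomOver.comp rfl ⟨φ, inferInstance⟩ ψ : HomOver p (f ≫ g) a b')) :
    p.IsStronglyCocartesian f φ where
  universal_property' g φ' hφ' := by
    obtain ⟨ψ, hψ, huniq⟩ := (hφ _ g).existsUnique ⟨φ', hφ'⟩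
    exact ⟨ψ.1, ⟨ψ.2, congrArg Subtype.val hψ⟩,
      fun χ hχ => congrArg Subtype.val (huniq ⟨χ, hχ.1⟩ (Subtype.ext hχ.2))⟩

-- A morphism over `g` is a vertical morphism followed by a cartesian lift of `g`.
lemma bijective_comp_of_bijective_comp_vertical [p.IsFibered] {R S : 𝒮} {f : R ⟶ S} {a b : 𝒳}
    (φ : a ⟶ b) [p.IsHomLift f φ] (hφ : ∀ b' : 𝒳, p.obj b' = S →
      Function.Bijective fun χ : HomOver p (𝟙 S) b b' =>
        HomOver.comp (Category.comp_id f).symm ⟨φ, inferInstance⟩ χ)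
    (b' : 𝒳) (g : S ⟶ p.obj b') :
    Function.Bijective fun ψ : HomOver p g b b' =>
      (HomOver.comp rfl ⟨φ, inferInstance⟩ ψ : HomOver p (f ≫ g) a b') := by
  obtain ⟨W, cW, _⟩ := IsPreFibered.exists_isCartesian p rfl g
  have hcomm : (fun ψ : HomOver p g b b' =>
        (HomOver.comp rfl ⟨φ, inferInstance⟩ ψ : HomOver p (f ≫ g) a b')) ∘
        (fun χ : HomOver p (𝟙 S) b W => χ.comp (Category.id_comp g).symm ⟨cW, inferInstance⟩) =
      (fun ψ : HomOver p f a W => ψ.comp rfl ⟨cW, inferInstance⟩) ∘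
        (fun χ : HomOver p (𝟙 S) b W =>
          HomOver.comp (Category.comp_id f).symm ⟨φ, inferInstance⟩ χ) :=
    funext fun χ => Subtype.ext (Category.assoc _ _ _).symm
  refine (Function.Bijective.of_comp_iff _
    (bijective_comp_of_isStronglyCartesian (Category.id_comp g).symm cW)).mp ?_
  rw [hcomm]
  exact (bijective_comp_of_isStronglyCartesian rfl cW).comp
    (hφ W (IsHomLift.domain_eq p g cW))

namespace IsPiDiagram

variable {R S : 𝒮} {f : R ⟶ S} {P X Y : 𝒳} {c : X ⟶ Y} {ε : X ⟶ P}
  (hpi : IsPiDiagram p f c ε) {X' Y' : 𝒳} (c' : X' ⟶ Y') [p.IsHomLift f c']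

noncomputable def transpose (v : HomOver p (𝟙 S) Y' Y) : HomOver p (𝟙 R) X' P :=
  have := hpi.cart
  have := hpi.vert
  have := v.2
  ⟨IsStronglyCartesian.map p f c (Category.id_comp f).symm (c' ≫ v.1) ≫ ε, inferInstance⟩

lemma transpose_val (v : HomOver p (𝟙 S) Y' Y) (w : X' ⟶ X) [p.IsHomLift (𝟙 R) w]
    (hw : w ≫ c = c' ≫ v.1) : (hpi.transpose c' v).1 = w ≫ ε := by
  have := hpi.cart
  have := v.2
  exact congrArg (· ≫ ε) (IsStronglyCartesian.map_uniq p f c (Category.id_comp f).symm _ w hw).symm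

lemma bijective_transpose [p.IsStronglyCartesian f c'] : Function.Bijective (hpi.transpose c') := by
  have := hpi.cart
  rw [Function.bijective_iff_existsUnique]
  rintro ⟨u, hu⟩
  obtain ⟨v, ⟨hv, hvu⟩, huniq⟩ := hpi.universal c' inferInstance u hu
  refine ⟨⟨v, hv⟩, Subtype.ext ?_, fun v' hv' => Subtype.ext (huniq v'.1 ⟨v'.2, ?_⟩)⟩
  · obtain ⟨w, ⟨hw, hwc⟩, -⟩ :=
      IsStronglyCartesian.universal_property p f c (𝟙 R) f (Category.id_comp f).symm (c' ≫ v)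
    rw [hpi.transpose_val c' _ w hwc]
    exact hvu w hw hwc
  · intro w hw hwc
    rw [← hpi.transpose_val c' v' w hwc, hv']

end IsPiDiagram

lemma IsPiDiagram.comp_transpose_val {A B₀ C₀ D : 𝒮} {f : A ⟶ B₀} {h : A ⟶ C₀} {k : B₀ ⟶ D}
    {W X Y W₁ X₁ Y₁ : 𝒳} {c : X ⟶ Y} {ε : X ⟶ W} (hpi : IsPiDiagram p k c ε) {q : X₁ ⟶ Y₁}
    {ε₁ : X₁ ⟶ W₁} (hpi₁ : IsPiDiagram p h q ε₁) {cX : X₁ ⟶ X} [p.IsHomLift f cX] {cY : Y₁ ⟶ Y}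
    {cW : W₁ ⟶ W} (hq : q ≫ cY = cX ≫ c) (hε₁ : ε₁ ≫ cW = cX ≫ ε)
    {P Z P' Z' : 𝒳} {t : P ⟶ Z} {cP : P' ⟶ P} [p.IsHomLift h cP] {cZ : Z' ⟶ Z}
    [p.IsHomLift k cZ] {m : P' ⟶ Z'} [p.IsHomLift f m] (hm : m ≫ cZ = cP ≫ t)
    {v : HomOver p (𝟙 D) Z Y} {v₁ : HomOver p (𝟙 C₀) P Y₁} (hv : v₁.1 ≫ cY = t ≫ v.1) :
    m ≫ (hpi.transpose cZ v).1 = (hpi₁.transpose cP v₁).1 ≫ cW := by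
  have := hpi.cart
  have := hpi₁.cart
  have := v.2
  have := v₁.2
  obtain ⟨w, ⟨_, hw⟩, -⟩ := IsStronglyCartesian.universal_property p k c (𝟙 B₀) k
    (Category.id_comp k).symm (cZ ≫ v.1)
  obtain ⟨w₁, ⟨_, hw₁⟩, -⟩ := IsStronglyCartesian.universal_property p h q (𝟙 A) h
    (Category.id_comp h).symm (cP ≫ v₁.1)
  have hmw : m ≫ w = w₁ ≫ cX := by
    apply IsStronglyCartesian.ext p k c f
    simp only [Category.assoc, hw, ← hq, reassoc_of% hw₁, hv, reassoc_of% hm]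
  rw [hpi.transpose_val cZ v w hw, hpi₁.transpose_val cP v₁ w₁ hw₁, reassoc_of% hmw,
    Category.assoc, hε₁]

lemma bijective_comp_of_piDiagramStableAlong [p.IsFibered] {A B₀ C₀ D : 𝒮} {f : A ⟶ B₀}
    {h : A ⟶ C₀} {k : B₀ ⟶ D} {g : C₀ ⟶ D} (hsq : IsPullback f h k g) {W X Y : 𝒳}
    {c : X ⟶ Y} {ε : X ⟶ W} (hpi : IsPiDiagram p k c ε) (hstab : PiDiagramStableAlong p k c ε g)
    {P Z P' Z' : 𝒳} (t : P ⟶ Z) [p.IsStronglyCocartesian g t] (cP : P' ⟶ P)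
    [p.IsStronglyCartesian h cP] (cZ : Z' ⟶ Z) [p.IsStronglyCartesian k cZ] (m : P' ⟶ Z')
    [p.IsHomLift f m] (hm : m ≫ cZ = cP ≫ t) :
    Function.Bijective fun χ : HomOver p (𝟙 B₀) Z' W =>
      HomOver.comp (Category.comp_id f).symm ⟨m, inferInstance⟩ χ := by
  have := hpi.cart
  have := hpi.vert
  obtain ⟨X₁, cX, _⟩ := IsPreFibered.exists_isCartesian p (IsHomLift.domain_eq p k c) f
  obtain ⟨Y₁, cY, _⟩ := IsPreFibered.exists_isCartesian p (IsHomLift.codomain_eq p k c) g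
  obtain ⟨W₁, cW, _⟩ := IsPreFibered.exists_isCartesian p (IsHomLift.codomain_eq p (𝟙 B₀) ε) f
  obtain ⟨q, ⟨_, hq⟩, -⟩ :=
    IsStronglyCartesian.universal_property p g cY h (f ≫ k) hsq.w (cX ≫ c)
  obtain ⟨ε₁, ⟨_, hε₁⟩, -⟩ :=
    IsStronglyCartesian.universal_property p f cW (𝟙 A) f (Category.id_comp f).symm (cX ≫ ε)
  have hpi₁ : IsPiDiagram p h q ε₁ := hstab h f hsq.flip cW cX cY q ε₁
    inferInstance inferInstance inferInstance inferInstance hq inferInstance hε₁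
  let pullY := Equiv.ofBijective _ (bijective_comp_of_isStronglyCartesian
    (p := p) (g := 𝟙 C₀) (a' := P) (Category.id_comp g).symm cY)
  let pushT : HomOver p (𝟙 D) Z Y → HomOver p g P Y :=
    fun v => HomOver.comp (Category.comp_id g).symm ⟨t, inferInstance⟩ v
  have hcomp : (fun χ : HomOver p (𝟙 B₀) Z' W =>
        HomOver.comp (Category.comp_id f).symm ⟨m, inferInstance⟩ χ) ∘ hpi.transpose cZ =
      (fun ψ : HomOver p (𝟙 A) P' W₁ => ψ.comp (Category.id_comp f).symm ⟨cW, inferInstance⟩) ∘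
        hpi₁.transpose cP ∘ pullY.symm ∘ pushT :=
    funext fun v => Subtype.ext <| hpi.comp_transpose_val (f := f) hpi₁ hq hε₁ hm <|
      congrArg Subtype.val (pullY.apply_symm_apply (pushT v))
  refine (Function.Bijective.of_comp_iff _ (hpi.bijective_transpose cZ)).mp ?_
  rw [hcomp]
  exact (bijective_comp_of_isStronglyCartesian _ cW).comp <| (hpi₁.bijective_transpose cP).comp <|
    pullY.symm.bijective.comp <| bijective_comp_of_isStronglyCocartesian _ t

end FOHL

open CategoryTheory CategoryTheory.Functor FOHL

/-- Beck–Chevalley swap. Let `p : 𝒳 ⥤ 𝒮` be a fibration and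
`g : C₀ ⟶ D`, `k : B₀ ⟶ D` morphisms of `𝒮`.  If for every `Q` in the fiber over `B₀` there
is a `Π`-diagram over `k` based on `Q` which is stable along `g`, then every cocartesian lift
of `g` is stable along `k`. -/
theorem cocartesian_stable_of_pi_stable
    {𝒮 𝒳 : Type*} [Category 𝒮] [Category 𝒳] (p : 𝒳 ⥤ 𝒮) [p.IsFibered]
    {B₀ C₀ D : 𝒮} (g : C₀ ⟶ D) (k : B₀ ⟶ D)
    (hPi : ∀ Q : 𝒳, p.obj Q = B₀ → ∃ (X Y : 𝒳) (c : X ⟶ Y) (ε : X ⟶ Q),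
      IsPiDiagram p k c ε ∧ PiDiagramStableAlong p k c ε g) :
    ∀ {P Z : 𝒳} (t : P ⟶ Z), p.IsStronglyCocartesian g t →
      CocartesianStableAlong p g t k := by
  intro P Z t _ A f h hsq P' Z' cP cZ m _ _ _ hm
  refine isStronglyCocartesian_of_bijective_comp m
    (bijective_comp_of_bijective_comp_vertical m fun W hW => ?_)
  obtain ⟨X, Y, c, ε, hpi, hstab⟩ := hPi W hW
  exact bijective_comp_of_piDiagramStableAlong hsq hpi hstab t cP cZ m hm
end

section
/- Composition of Π-diagrams: in a Grothendieck fibration p : C → B, given composable morphisms f : A → B₀ and g : B₀ → C₀, a Π-diagram over f based on P (with output Π_f P) and a Π-diagram over g based on an object R isomorphic to the data as constructed, the composite diagram — obtained by choosing a cartesian lift of f into the input of the second diagram and composing appropriately — is again a Π-diagram over g∘f based on P. In particular, if pullback along f and along g admit right adjoints, then pullback along g∘f admits a right adjoint given by the composite. -/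
open CategoryTheory CategoryTheory.Limits CategoryTheory.Functor

open CategoryTheory CategoryTheory.Functor FOHL

/-!
Factor a cartesian lift `c'` of `f ≫ g` as `d ≫ m` with `d` cartesian over `f` and `m` over `g`.
Vertical maps `v : Y' ⟶ T` correspond, through the `Π`-diagram over `g`, to vertical maps
`M ⟶ R₀`, and these, through the `Π`-diagram over `f`, to vertical maps `X' ⟶ P`. The composite
correspondence is pulling `v` back along `ct ≫ t` and composing with `w ≫ pr`, because `ct` and
`w` exhibit `W ⟶ Q` as the pullback of `s` along `f`.
-/

namespace CategoryTheory.Functor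

variable {𝒮 𝒳 : Type*} [Category 𝒮] [Category 𝒳] (p : 𝒳 ⥤ 𝒮)

lemma exists_isStronglyCartesian_fac_of_comp [p.IsFibered] {A B C : 𝒮} (f : A ⟶ B)
    (g : B ⟶ C) {X Y : 𝒳} (c : X ⟶ Y) [p.IsStronglyCartesian (f ≫ g) c] :
    ∃ (M : 𝒳) (d : X ⟶ M) (m : M ⟶ Y),
      p.IsStronglyCartesian f d ∧ p.IsStronglyCartesian g m ∧ d ≫ m = c := by
  obtain ⟨M, m, hm⟩ := IsPreFibered.exists_isCartesian p (IsHomLift.codomain_eq p (f ≫ g) c) g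
  let d := IsStronglyCartesian.map p g m (f' := f ≫ g) rfl c
  have hdm : d ≫ m = c := IsStronglyCartesian.fac p g m rfl c
  have : p.IsStronglyCartesian (f ≫ g) (d ≫ m) := hdm ▸ inferInstance
  exact ⟨M, d, m, IsStronglyCartesian.of_comp p (g := g) (ψ := m), inferInstance, hdm⟩

lemma IsCartesian.forall_fac_comp_iff {A B : 𝒮} (f : A ⟶ B) {W S Q R X : 𝒳}
    (c₁ : W ⟶ S) [p.IsCartesian f c₁] (c₂ : Q ⟶ R) [p.IsCartesian f c₂]
    (w : W ⟶ Q) [p.IsHomLift (𝟙 A) w] (s : S ⟶ R) (hcomm : w ≫ c₂ = c₁ ≫ s)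
    (φ : X ⟶ S) [p.IsHomLift f φ] (Pr : (X ⟶ Q) → Prop) :
    (∀ w' : X ⟶ W, p.IsHomLift (𝟙 A) w' → w' ≫ c₁ = φ → Pr (w' ≫ w)) ↔
      ∀ w'' : X ⟶ Q, p.IsHomLift (𝟙 A) w'' → w'' ≫ c₂ = φ ≫ s → Pr w'' := by
  refine ⟨fun h w'' _ hw'' => ?_, fun h w' _ hw' => h _ inferInstance (by simp [hcomm, ← hw'])⟩
  have : w'' = IsCartesian.map p f c₁ φ ≫ w :=
    IsCartesian.ext p f c₂ _ _ (by simp [hcomm, hw''])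
  exact this ▸ h _ inferInstance (IsCartesian.fac p f c₁ φ)

lemma IsStronglyCartesian.forall_fac_comp_iff_forall_fac {A B C : 𝒮} (f : A ⟶ B) (g : B ⟶ C)
    {X M Y W S T : 𝒳} (d : X ⟶ M) [p.IsHomLift f d] (m : M ⟶ Y) [p.IsHomLift g m]
    (t : S ⟶ T) [p.IsStronglyCartesian g t] (ct : W ⟶ S) [p.IsHomLift f ct]
    (v : Y ⟶ T) [p.IsHomLift (𝟙 C) v] (Pr : (X ⟶ W) → Prop) :
    (∀ w : X ⟶ W, p.IsHomLift (𝟙 A) w → w ≫ ct ≫ t = d ≫ m ≫ v → Pr w) ↔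
      ∀ σ : M ⟶ S, p.IsHomLift (𝟙 B) σ → σ ≫ t = m ≫ v →
        ∀ w : X ⟶ W, p.IsHomLift (𝟙 A) w → w ≫ ct = d ≫ σ → Pr w := by
  constructor
  · intro h σ _ hσ w _ hw
    exact h w inferInstance (by rw [← Category.assoc, hw, Category.assoc, hσ])
  · intro h w _ hw
    exact h _ inferInstance (IsCartesian.fac p g t (m ≫ v)) w inferInstance
      (IsStronglyCartesian.ext p g t f (by simpa using hw))

end CategoryTheory.Functor

namespace FOHL.IsPiDiagram

variable {𝒮 𝒳 : Type*} [Category 𝒮] [Category 𝒳] {p : 𝒳 ⥤ 𝒮}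

theorem existsUnique_comp {A B₀ C₀ : 𝒮} {f : A ⟶ B₀} {g : B₀ ⟶ C₀}
    {P Q R₀ S T : 𝒳} {q : Q ⟶ R₀} {pr : Q ⟶ P} (h₁ : IsPiDiagram p f q pr)
    {t : S ⟶ T} {s : S ⟶ R₀} (h₂ : IsPiDiagram p g t s)
    {W : 𝒳} (ct : W ⟶ S) [p.IsStronglyCartesian f ct]
    (w : W ⟶ Q) [p.IsHomLift (𝟙 A) w] (hcomm : w ≫ q = ct ≫ s)
    {X M Y : 𝒳} (d : X ⟶ M) [p.IsStronglyCartesian f d] (m : M ⟶ Y)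
    [p.IsStronglyCartesian g m] (u : X ⟶ P) [p.IsHomLift (𝟙 A) u] :
    ∃! v : Y ⟶ T, p.IsHomLift (𝟙 C₀) v ∧
      ∀ w' : X ⟶ W, p.IsHomLift (𝟙 A) w' → w' ≫ ct ≫ t = (d ≫ m) ≫ v → w' ≫ w ≫ pr = u := by
  have := h₁.cart; have := h₁.vert; have := h₂.cart; have := h₂.vert
  have cond_iff : ∀ v : Y ⟶ T, p.IsHomLift (𝟙 C₀) v →
      ((∀ w' : X ⟶ W, p.IsHomLift (𝟙 A) w' → w' ≫ ct ≫ t = (d ≫ m) ≫ v → w' ≫ w ≫ pr = u) ↔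
        ∀ σ : M ⟶ S, p.IsHomLift (𝟙 B₀) σ → σ ≫ t = m ≫ v →
          ∀ w'' : X ⟶ Q, p.IsHomLift (𝟙 A) w'' → w'' ≫ q = d ≫ σ ≫ s → w'' ≫ pr = u) := by
    intro v _
    have := IsStronglyCartesian.forall_fac_comp_iff_forall_fac p f g d m t ct v
      (fun w' => (w' ≫ w) ≫ pr = u)
    simp only [Category.assoc] at this ⊢
    refine this.trans (forall₂_congr fun σ _ => forall_congr' fun _ => ?_)
    simpa only [Category.assoc] using
      IsCartesian.forall_fac_comp_iff p f ct q w s hcomm (d ≫ σ) (fun w'' => w'' ≫ pr = u)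
  obtain ⟨v₁, ⟨_, hv₁u⟩, hv₁_uniq⟩ := h₁.universal d inferInstance u inferInstance
  obtain ⟨v, ⟨_, hvv₁⟩, hv_uniq⟩ := h₂.universal m inferInstance v₁ inferInstance
  refine ⟨v, ⟨inferInstance, (cond_iff v inferInstance).2 fun σ hσ hσt => hvv₁ σ hσ hσt ▸ hv₁u⟩, ?_⟩
  rintro v' ⟨_, hv'u⟩
  exact hv_uniq v' ⟨inferInstance, fun σ _ hσt =>
    hv₁_uniq _ ⟨inferInstance, (cond_iff v' inferInstance).1 hv'u σ inferInstance hσt⟩⟩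

end FOHL.IsPiDiagram

/-- composition of `Π`-diagrams. In a Grothendieck fibration
`p : 𝒳 ⥤ 𝒮`, given composable morphisms `f : A ⟶ B₀` and `g : B₀ ⟶ C₀`, a `Π`-diagram over
`f` based on `P` (with data `q : Q ⟶ R₀`, `pr : Q ⟶ P`) and a `Π`-diagram over `g` based on
`R₀` (with data `t : S ⟶ T`, `s : S ⟶ R₀`), the composite diagram — obtained by choosing a
cartesian lift `ct : W ⟶ S` of `f` and the induced vertical comparison `w : W ⟶ Q` with
`w ≫ q = ct ≫ s`, and composing — is again a `Π`-diagram over `f ≫ g` based on `P`.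
In particular, if pullback along `f` and along `g` admit right adjoints, then pullback along
`f ≫ g` admits a right adjoint given by the composite. -/
theorem pi_diagram_comp
    {𝒮 𝒳 : Type*} [Category 𝒮] [Category 𝒳] (p : 𝒳 ⥤ 𝒮) [p.IsFibered]
    {A B₀ C₀ : 𝒮} (f : A ⟶ B₀) (g : B₀ ⟶ C₀)
    {P Q R₀ S T : 𝒳} (q : Q ⟶ R₀) (pr : Q ⟶ P) (h₁ : IsPiDiagram p f q pr)
    (t : S ⟶ T) (s : S ⟶ R₀) (h₂ : IsPiDiagram p g t s)
    {W : 𝒳} (ct : W ⟶ S) (hct : p.IsStronglyCartesian f ct)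
    (w : W ⟶ Q) (hw : p.IsHomLift (𝟙 A) w) (hcomm : w ≫ q = ct ≫ s) :
    IsPiDiagram p (f ≫ g) (ct ≫ t) (w ≫ pr) := by
  have := h₁.vert
  have := h₂.cart
  refine ⟨inferInstance, inferInstance, fun c' hc' u hu => ?_⟩
  obtain ⟨M, d, m, hd, hm, rfl⟩ := exists_isStronglyCartesian_fac_of_comp p f g c'
  exact h₁.existsUnique_comp h₂ ct w hcomm d m u
end
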